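/- Let γ = (γ₁,γ₂,γ₃) : [a,b] → ℝ³ be a Euclidean C²-smooth regular curve and t ∈ [a,b] a point with ω(γ̇(t)) ≠ 0. Then the limit as L → +∞ of the curvature k^{L,∇}_γ(t) associated to the first Schouten–Van Kampen affine connection exists and equals √(γ̇₁(t)² + γ̇₂(t)²) / (2|ω(γ̇(t))|). -/
import Mathlib


open Filter Real Topology

theorem curvature_limit_first_SvK_nonhorizontal
    (γ₁ γ₂ γ₃ ω : ℝ → ℝ) (k : ℝ → ℝ → ℝ) (a b t : ℝ)
    (ht : t ∈ Set.Icc a b)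
    (hγ : ContDiffOn ℝ 2 (fun s => (γ₁ s, γ₂ s, γ₃ s)) (Set.Icc a b))
    (hreg : ∀ s ∈ Set.Icc a b, ¬ (deriv γ₁ s = 0 ∧ deriv γ₂ s = 0 ∧ deriv γ₃ s = 0))
    (hω : ∀ s, ω s = deriv γ₃ s + (1/2) * (γ₂ s * deriv γ₁ s - γ₁ s * deriv γ₂ s))
    (hk : ∀ L s, k L s = Real.sqrt (((deriv (deriv γ₁) s + L * ω s * deriv γ₂ s / 2)^2 + (deriv (deriv γ₂) s - L * ω s * deriv γ₁ s / 2)^2 + L * (deriv ω s)^2) / ((deriv γ₁ s)^2 + (deriv γ₂ s)^2 + L * (ω s)^2)^2 - (deriv γ₁ s * (deriv (deriv γ₁) s + L * ω s * deriv γ₂ s / 2) + deriv γ₂ s * (deriv (deriv γ₂) s - L * ω s * deriv γ₁ s / 2) + L * ω s * deriv ω s)^2 / ((deriv γ₁ s)^2 + (deriv γ₂ s)^2 + L * (ω s)^2)^3))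
    (h0 : ω t ≠ 0) :
    Filter.Tendsto (fun L => k L t) Filter.atTop
      (nhds (Real.sqrt ((deriv γ₁ t)^2 + (deriv γ₂ t)^2) / (2 * |ω t|))) := by
  set x := deriv γ₁ t with hxdef
  set y := deriv γ₂ t with hydef
  set A := deriv (deriv γ₁) t with hAdef
  set B := deriv (deriv γ₂) t with hBdef
  set w := ω t with hwdef
  set d := deriv ω t with hddef
  have hw2 : (0:ℝ) < w^2 := by positivity
  set g : ℝ → ℝ := fun u =>
    ((u*A + w*y/2)^2 + (u*B - w*x/2)^2 + u*d^2) / (u*(x^2+y^2) + w^2)^2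
    - u * (u*(x*A+y*B) + w*d)^2 / (u*(x^2+y^2) + w^2)^3 with hgdef
  have hg0 : g 0 = (x^2+y^2)/(4*w^2) := by
    simp only [hgdef]
    field_simp
    ring
  have hgc : ContinuousAt g 0 := by
    apply ContinuousAt.sub
    · exact ContinuousAt.div (by fun_prop) (by fun_prop) (by simp; positivity)
    · exact ContinuousAt.div (by fun_prop) (by fun_prop) (by simp; positivity)
  have hlim : Tendsto (fun L => g L⁻¹) atTop (nhds ((x^2+y^2)/(4*w^2))) := by
    rw [← hg0]
    exact hgc.tendsto.comp tendsto_inv_atTop_zero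
  have heq : ∀ᶠ L in atTop, g L⁻¹ =
      ((A + L * w * y / 2)^2 + (B - L * w * x / 2)^2 + L * d^2) / (x^2 + y^2 + L * w^2)^2
      - (x * (A + L * w * y / 2) + y * (B - L * w * x / 2) + L * w * d)^2 / (x^2 + y^2 + L * w^2)^3 := by
    filter_upwards [eventually_gt_atTop 0] with L hL
    have hD : (0:ℝ) < x^2 + y^2 + L * w^2 := by positivity
    have hne : L⁻¹*(x^2+y^2) + w^2 ≠ 0 := by positivity
    simp only [hgdef]
    field_simp
    ring
  have hmain : Tendsto (fun L => k L t) atTop (nhds (Real.sqrt ((x^2+y^2)/(4*w^2)))) := by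
    have := (Real.continuous_sqrt.continuousAt.tendsto.comp (hlim.congr' heq))
    refine this.congr fun L => ?_
    rw [hk]
    rfl
  have hval : Real.sqrt ((x^2+y^2)/(4*w^2)) = Real.sqrt (x^2+y^2) / (2*|w|) := by
    rw [Real.sqrt_div (by positivity : (0:ℝ) ≤ x^2+y^2),
      show (4:ℝ)*w^2 = (2*|w|)^2 by rw [mul_pow, sq_abs]; ring,
      Real.sqrt_sq (by positivity)]
  rw [← hval]; exact hmain
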